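/- arXiv:2006.07133 — 2 statements merged into one kernel-verified Lean document; each statement's English description precedes it below -/
import Mathlib

section
/- The tensors 𝒱₁,…,𝒱_m produced by m breakdown-free steps of the tensor T-global Arnoldi process form an orthonormal family: ⟨𝒱_i, 𝒱_j⟩ = δ_{ij}, and each 𝒱_j lies in the tensor Krylov subspace spanned by {𝒱, 𝒜⋆𝒱, …, 𝒜^{j-1}⋆𝒱}. -/
/-- The T-product of two third-order tensors. -/
def tprod3 {n₁ n₂ m n₃ : ℕ} (A : Fin n₁ → Fin n₂ → Fin n₃ → ℝ)
    (B : Fin n₂ → Fin m → Fin n₃ → ℝ) : Fin n₁ → Fin m → Fin n₃ → ℝ :=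
  fun i j k => ∑ t : Fin n₃, ∑ l : Fin n₂, A i l (k - t) * B l j t

/-- The entrywise inner product of two third-order tensors. -/
def tinner {n₁ n₂ n₃ : ℕ} (A B : Fin n₁ → Fin n₂ → Fin n₃ → ℝ) : ℝ :=
  ∑ i : Fin n₁, ∑ j : Fin n₂, ∑ k : Fin n₃, A i j k * B i j k

/-- The Frobenius norm of a third-order tensor. -/
noncomputable def tnorm {n₁ n₂ n₃ : ℕ} (A : Fin n₁ → Fin n₂ → Fin n₃ → ℝ) : ℝ :=
  Real.sqrt (tinner A A)

/-!
Each `V (j + 1)` is the normalized Gram–Schmidt residual of `A ⋆ V j` against `V 0, …, V j` for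
the symmetric bilinear form `tinner`. A residual against an orthonormal family is orthogonal to
that family, so orthonormality follows by strong induction on the index. Membership in the Krylov
spaces is another induction: `X ↦ A ⋆ X` maps the `k`-th Krylov space into the `(k + 1)`-st, and
these spaces increase with `k`.
-/

open Finset

section GramSchmidt

variable {R M ι : Type*} [CommRing R] [AddCommGroup M] [Module R M]

def gramSchmidtResidual (B : LinearMap.BilinForm R M) (v : ι → M) (s : Finset ι) (x : M) : M :=
  x - ∑ i ∈ s, B (v i) x • v i

theorem apply_gramSchmidtResidual_eq_zero [DecidableEq ι] (B : LinearMap.BilinForm R M)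
    {v : ι → M} {s : Finset ι} (hv : ∀ a ∈ s, ∀ i ∈ s, B (v a) (v i) = if a = i then 1 else 0)
    (x : M) {a : ι} (ha : a ∈ s) : B (v a) (gramSchmidtResidual B v s x) = 0 := by
  have hsum : ∑ i ∈ s, B (v i) x * B (v a) (v i) = B (v a) x := by
    rw [sum_congr rfl fun i hi => by rw [hv a ha i hi, mul_ite, mul_one, mul_zero],
      sum_ite_eq s a, if_pos ha]
  simp only [gramSchmidtResidual, map_sub, map_sum, map_smul, smul_eq_mul, hsum, sub_self]

theorem apply_eq_ite_of_eq_smul_gramSchmidtResidual [LinearOrder ι] [LocallyFiniteOrderBot ι]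
    [WellFoundedLT ι] {B : LinearMap.BilinForm R M} (hB : B.IsSymm) {v : ι → M}
    (hunit : ∀ a, B (v a) (v a) = 1)
    (hres : ∀ b, ∃ (c : R) (x : M), v b = c • gramSchmidtResidual B v (Iio b) x) (a b : ι) :
    B (v a) (v b) = if a = b then 1 else 0 := by
  have horth : ∀ b a, a < b → B (v a) (v b) = 0 := by
    intro b
    induction b using WellFoundedLT.induction with
    | ind b ih =>
      have hbelow : ∀ a ∈ Iio b, ∀ i ∈ Iio b, B (v a) (v i) = if a = i then 1 else 0 := by
        intro a ha i hi
        rcases lt_trichotomy a i with hai | rfl | hia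
        · rw [ih i (mem_Iio.mp hi) a hai, if_neg hai.ne]
        · rw [hunit, if_pos rfl]
        · rw [hB.eq, ih a (mem_Iio.mp ha) i hia, if_neg hia.ne']
      intro a hab
      obtain ⟨c, x, hvb⟩ := hres b
      rw [hvb, map_smul, apply_gramSchmidtResidual_eq_zero B hbelow x (mem_Iio.mpr hab),
        smul_zero]
  rcases lt_trichotomy a b with hab | rfl | hba
  · rw [horth b a hab, if_neg hab.ne]
  · rw [hunit, if_pos rfl]
  · rw [hB.eq, horth a b hba, if_neg hba.ne']

end GramSchmidt

section Krylov

variable {R M : Type*} [CommRing R] [AddCommGroup M] [Module R M]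

def krylovSubspace (f : Module.End R M) (w : M) (k : ℕ) : Submodule R M :=
  Submodule.span R (Set.range fun i : Fin k => (f ^ (i : ℕ)) w)

variable {f : Module.End R M} {w : M}

theorem krylovSubspace_mono {k l : ℕ} (hkl : k ≤ l) :
    krylovSubspace f w k ≤ krylovSubspace f w l := by
  refine Submodule.span_mono ?_
  rintro _ ⟨i, rfl⟩
  exact ⟨Fin.castLE hkl i, rfl⟩

theorem self_mem_krylovSubspace_one : w ∈ krylovSubspace f w 1 :=
  Submodule.subset_span ⟨0, by simp⟩

theorem apply_mem_krylovSubspace_succ {k : ℕ} {v : M} (hv : v ∈ krylovSubspace f w k) :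
    f v ∈ krylovSubspace f w (k + 1) := by
  have hmap : (krylovSubspace f w k).map f ≤ krylovSubspace f w (k + 1) := by
    rw [krylovSubspace, Submodule.map_span, Submodule.span_le]
    rintro _ ⟨_, ⟨i, rfl⟩, rfl⟩
    refine Submodule.subset_span ⟨i.succ, ?_⟩
    simp only [Fin.val_succ, pow_succ', Module.End.mul_apply]
  exact hmap (Submodule.mem_map_of_mem hv)

theorem mem_krylovSubspace_iff {k : ℕ} {v : M} :
    v ∈ krylovSubspace f w k ↔ ∃ α : ℕ → R, v = ∑ i ∈ range k, α i • (f ^ i) w := by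
  rw [krylovSubspace, Submodule.mem_span_range_iff_exists_fun]
  constructor
  · rintro ⟨c, rfl⟩
    refine ⟨fun i => if h : i < k then c ⟨i, h⟩ else 0, ?_⟩
    rw [← Fin.sum_univ_eq_sum_range (fun i => (if h : i < k then c ⟨i, h⟩ else 0) • (f ^ i) w)]
    simp
  · rintro ⟨α, rfl⟩
    exact ⟨fun i => α i, Fin.sum_univ_eq_sum_range (fun i => α i • (f ^ i) w) k⟩

theorem mem_krylovSubspace_of_recurrence {m : ℕ} {v : Fin (m + 1) → M}
    (h0 : v 0 ∈ krylovSubspace f w 1)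
    (hsucc : ∀ j : Fin m, ∃ (c : R) (a : Fin (m + 1) → R),
      v j.succ = c • (f (v j.castSucc) - ∑ i ∈ Iio j.succ, a i • v i))
    (k : Fin (m + 1)) : v k ∈ krylovSubspace f w ((k : ℕ) + 1) := by
  induction k using WellFoundedLT.induction with
  | ind k ih =>
    cases k using Fin.cases with
    | zero => exact h0
    | succ j =>
      obtain ⟨c, a, hv⟩ := hsucc j
      rw [hv]
      refine Submodule.smul_mem _ _ (Submodule.sub_mem _ ?_
        (Submodule.sum_mem _ fun i hi => Submodule.smul_mem _ _ ?_))
      · simpa using apply_mem_krylovSubspace_succ (ih _ j.castSucc_lt_succ)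
      · rw [mem_Iio] at hi
        exact krylovSubspace_mono (by have := Fin.lt_def.mp hi; omega) (ih i hi)

end Krylov

section Tensor

variable {n₁ n₂ n₃ : ℕ}

theorem tinner_self_nonneg (X : Fin n₁ → Fin n₂ → Fin n₃ → ℝ) : 0 ≤ tinner X X :=
  sum_nonneg fun _ _ => sum_nonneg fun _ _ => sum_nonneg fun _ _ => mul_self_nonneg _

def tinnerForm : LinearMap.BilinForm ℝ (Fin n₁ → Fin n₂ → Fin n₃ → ℝ) :=
  LinearMap.mk₂ ℝ tinner
    (fun _ _ _ => by simp only [tinner, Pi.add_apply, add_mul, sum_add_distrib])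
    (fun _ _ _ => by simp only [tinner, Pi.smul_apply, smul_eq_mul, mul_sum, mul_assoc])
    (fun _ _ _ => by simp only [tinner, Pi.add_apply, mul_add, sum_add_distrib])
    (fun _ _ _ => by simp only [tinner, Pi.smul_apply, smul_eq_mul, mul_sum, mul_left_comm])

@[simp]
theorem tinnerForm_apply (X Y : Fin n₁ → Fin n₂ → Fin n₃ → ℝ) : tinnerForm X Y = tinner X Y :=
  rfl

theorem tinnerForm_isSymm :
    (tinnerForm : LinearMap.BilinForm ℝ (Fin n₁ → Fin n₂ → Fin n₃ → ℝ)).IsSymm :=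
  ⟨fun X Y => by simp only [tinnerForm_apply, tinner, mul_comm]⟩

theorem tinner_inv_tnorm_smul_self {X : Fin n₁ → Fin n₂ → Fin n₃ → ℝ} (hX : tnorm X ≠ 0) :
    tinner ((tnorm X)⁻¹ • X) ((tnorm X)⁻¹ • X) = 1 := by
  have hsq : tinner X X = tnorm X ^ 2 := (Real.sq_sqrt (tinner_self_nonneg X)).symm
  rw [← tinnerForm_apply, map_smul, map_smul, LinearMap.smul_apply, tinnerForm_apply, hsq,
    smul_eq_mul, smul_eq_mul]
  field_simp

def tprodLinear {m : ℕ} (A : Fin n₁ → Fin n₂ → Fin n₃ → ℝ) :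
    (Fin n₂ → Fin m → Fin n₃ → ℝ) →ₗ[ℝ] (Fin n₁ → Fin m → Fin n₃ → ℝ) where
  toFun := tprod3 A
  map_add' _ _ := by
    funext i j k
    simp only [tprod3, Pi.add_apply, mul_add, sum_add_distrib]
  map_smul' _ _ := by
    funext i j k
    simp only [tprod3, Pi.smul_apply, smul_eq_mul, RingHom.id_apply, mul_sum, mul_left_comm]

@[simp]
theorem coe_tprodLinear {m : ℕ} (A : Fin n₁ → Fin n₂ → Fin n₃ → ℝ) :
    ⇑(tprodLinear (m := m) A) = tprod3 A :=
  rfl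

end Tensor

/-- The tensors 𝒱₁,…,𝒱_m produced by m breakdown-free steps of the tensor
T-global Arnoldi process are orthonormal and each 𝒱_j lies in the tensor Krylov
subspace spanned by {𝒱, 𝒜⋆𝒱, …, 𝒜^{j-1}⋆𝒱}. -/
theorem tglobal_arnoldi_orthonormal_krylov {n s p m : ℕ}
    (A : Fin n → Fin n → Fin p → ℝ)
    (W : Fin n → Fin s → Fin p → ℝ)
    (V : Fin (m + 1) → Fin n → Fin s → Fin p → ℝ)
    (h : Fin (m + 1) → Fin m → ℝ)
    (hW : tnorm W ≠ 0)
    (hinit : V 0 = (tnorm W)⁻¹ • W)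
    -- Gram–Schmidt coefficients
    (hcoef : ∀ (j : Fin m) (i : Fin (m + 1)), i.val ≤ j.val →
      h i j = tinner (V i) (tprod3 A (V j.castSucc)))
    -- normalization coefficient
    (hnorm : ∀ j : Fin m,
      h j.succ j = tnorm (tprod3 A (V j.castSucc) -
        ∑ i ∈ Finset.univ.filter (fun i : Fin (m + 1) => i.val ≤ j.val), h i j • V i))
    -- no breakdown
    (hbd : ∀ j : Fin m, h j.succ j ≠ 0)
    -- next basis tensor
    (hstep : ∀ j : Fin m,
      V j.succ = (h j.succ j)⁻¹ • (tprod3 A (V j.castSucc) -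
        ∑ i ∈ Finset.univ.filter (fun i : Fin (m + 1) => i.val ≤ j.val), h i j • V i)) :
    (∀ i j : Fin m, tinner (V i.castSucc) (V j.castSucc) = if i = j then 1 else 0) ∧
    (∀ j : Fin m, ∃ α : ℕ → ℝ,
      V j.castSucc = ∑ i ∈ Finset.range (j.val + 1), α i • (fun X => tprod3 A X)^[i] W) := by
  have hprefix : ∀ j : Fin m,
      univ.filter (fun i : Fin (m + 1) => i.val ≤ j.val) = Iio j.succ := fun j => by
    ext i
    simp [Fin.lt_def]
  have hunit : ∀ a, tinnerForm (V a) (V a) = 1 := by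
    refine Fin.cases ?_ fun j => ?_
    · rw [hinit]
      exact tinner_inv_tnorm_smul_self hW
    · rw [hstep j, hnorm j]
      exact tinner_inv_tnorm_smul_self (hnorm j ▸ hbd j)
  have hres : ∀ b, ∃ (c : ℝ) (x : Fin n → Fin s → Fin p → ℝ),
      V b = c • gramSchmidtResidual tinnerForm V (Iio b) x := by
    refine Fin.cases ⟨1, V 0, ?_⟩ fun j => ⟨(h j.succ j)⁻¹, tprod3 A (V j.castSucc), ?_⟩
    · rw [gramSchmidtResidual, (Iio_eq_empty (a := (0 : Fin (m + 1)))).mpr isMin_bot, sum_empty,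
        sub_zero, one_smul]
    · rw [hstep j, gramSchmidtResidual, ← hprefix j]
      congr 2
      exact sum_congr rfl fun i hi => by rw [hcoef j i (mem_filter.mp hi).2, tinnerForm_apply]
  refine ⟨fun i j => ?_, fun j => ?_⟩
  · rw [← tinnerForm_apply, apply_eq_ite_of_eq_smul_gramSchmidtResidual tinnerForm_isSymm hunit hres]
    simp only [Fin.castSucc_inj]
  · have h0 : V 0 ∈ krylovSubspace (tprodLinear A) W 1 :=
      hinit ▸ Submodule.smul_mem _ _ self_mem_krylovSubspace_one
    have hkrylov := mem_krylovSubspace_of_recurrence h0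
      (fun j => ⟨_, fun i => h i j, by rw [hstep j, hprefix j]; rfl⟩) j.castSucc
    obtain ⟨α, hα⟩ := mem_krylovSubspace_iff.mp hkrylov
    exact ⟨α, by simpa only [Module.End.pow_apply, Fin.val_castSucc, coe_tprodLinear] using hα⟩
end

section
/- Let 𝕍_m ⊛ (·) be the linear map built from orthonormal tensors 𝒱₁,…,𝒱_{m+1} generated by the T-global Arnoldi process with initial residual ℛ₀, and let H̃_m be the (m+1)×m Hessenberg matrix. For 𝒳 = 𝒳₀ + 𝕍_m ⊛ y, the residual satisfies ‖𝒞 − 𝒜 ⋆ 𝒳‖_F = ‖ ‖ℛ₀‖_F e₁ − H̃_m y ‖₂, where e₁ ∈ ℝ^{m+1} is the first canonical basis vector. -/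
open Matrix

/-!
By linearity of the T-product and the Arnoldi relation, the residual `𝒞 − 𝒜 ⋆ 𝒳` is
`𝕍_{m+1} ⊛ (‖ℛ₀‖_F e₁ − H̃_m y)`, and orthonormality of the `𝒱_i` makes `z ↦ 𝕍_{m+1} ⊛ z` an
isometry from Euclidean `ℝ^{m+1}` onto its image.
-/

theorem Matrix.sum_mulVec_smul {R M ι κ : Type*} [CommSemiring R] [AddCommMonoid M] [Module R M]
    [Fintype ι] [Fintype κ] (H : Matrix ι κ R) (y : κ → R) (v : ι → M) :
    ∑ i, (H *ᵥ y) i • v i = ∑ j, y j • ∑ i, H i j • v i := by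
  simp only [mulVec, dotProduct, Finset.sum_smul, Finset.smul_sum, smul_smul]
  rw [Finset.sum_comm]
  simp only [mul_comm]

section Tensor

variable {n₁ n₂ n₃ m : ℕ}

def tprod3ₗ (A : Fin n₁ → Fin n₂ → Fin n₃ → ℝ) :
    (Fin n₂ → Fin m → Fin n₃ → ℝ) →ₗ[ℝ] Fin n₁ → Fin m → Fin n₃ → ℝ where
  toFun := tprod3 A
  map_add' B B' := by
    funext i j k
    simp [tprod3, mul_add, Finset.sum_add_distrib]
  map_smul' c B := by
    funext i j k
    simp [tprod3, Finset.mul_sum, mul_left_comm]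

@[simp]
theorem tprod3ₗ_apply (A : Fin n₁ → Fin n₂ → Fin n₃ → ℝ) (B : Fin n₂ → Fin m → Fin n₃ → ℝ) :
    tprod3ₗ A B = tprod3 A B :=
  rfl

def tinnerₗ : LinearMap.BilinForm ℝ (Fin n₁ → Fin n₂ → Fin n₃ → ℝ) :=
  LinearMap.mk₂ ℝ tinner
    (fun X Y B => by simp [tinner, add_mul, Finset.sum_add_distrib])
    (fun c X B => by simp [tinner, Finset.mul_sum, mul_assoc])
    (fun X B B' => by simp [tinner, mul_add, Finset.sum_add_distrib])
    (fun c X B => by simp [tinner, Finset.mul_sum, mul_left_comm])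

@[simp]
theorem tinnerₗ_apply (X Y : Fin n₁ → Fin n₂ → Fin n₃ → ℝ) : tinnerₗ X Y = tinner X Y :=
  rfl

theorem tprod3_sum_smul_of_arnoldi {ι κ : Type*} [Fintype ι] [Fintype κ]
    (A : Fin n₁ → Fin n₂ → Fin n₃ → ℝ) (W : κ → Fin n₂ → Fin m → Fin n₃ → ℝ)
    (V : ι → Fin n₁ → Fin m → Fin n₃ → ℝ) (H : Matrix ι κ ℝ)
    (harnoldi : ∀ j, tprod3 A (W j) = ∑ i, H i j • V i) (y : κ → ℝ) :
    tprod3 A (∑ j, y j • W j) = ∑ i, (H *ᵥ y) i • V i := by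
  rw [← tprod3ₗ_apply, map_sum, Matrix.sum_mulVec_smul]
  simp only [map_smul, tprod3ₗ_apply, harnoldi]

theorem tnorm_sum_smul_of_orthonormal {ι : Type*} [Fintype ι] [DecidableEq ι]
    (V : ι → Fin n₁ → Fin n₂ → Fin n₃ → ℝ)
    (horth : ∀ i j, tinner (V i) (V j) = if i = j then 1 else 0) (z : ι → ℝ) :
    tnorm (∑ i, z i • V i) = Real.sqrt (∑ i, z i ^ 2) := by
  have hsq : tinner (∑ i, z i • V i) (∑ i, z i • V i) = ∑ i, z i ^ 2 := by
    rw [← tinnerₗ_apply]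
    simp [horth, sq]
  rw [tnorm, hsq]

end Tensor

theorem tglobal_arnoldi_residual_eq {n s p m : ℕ}
    (A : Fin n → Fin n → Fin p → ℝ) (C X₀ : Fin n → Fin s → Fin p → ℝ)
    (V : Fin (m + 1) → Fin n → Fin s → Fin p → ℝ) (H : Matrix (Fin (m + 1)) (Fin m) ℝ)
    (harnoldi : ∀ j : Fin m, tprod3 A (V j.castSucc) = ∑ i : Fin (m + 1), H i j • V i)
    {β : ℝ} (hR0 : C - tprod3 A X₀ = β • V 0) (y : Fin m → ℝ) :
    C - tprod3 A (X₀ + ∑ j, y j • V j.castSucc) =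
      ∑ i, (β * (if i = 0 then 1 else 0) - (H *ᵥ y) i) • V i := by
  have hβ : β • V 0 = ∑ i, (β * (if i = 0 then 1 else 0)) • V i := by simp
  rw [← tprod3ₗ_apply, map_add, tprod3ₗ_apply, tprod3ₗ_apply,
    tprod3_sum_smul_of_arnoldi A _ V H harnoldi, sub_add_eq_sub_sub, hR0, hβ,
    ← Finset.sum_sub_distrib]
  simp only [sub_smul]

/-- For 𝒳 = 𝒳₀ + 𝕍_m ⊛ y, the GMRES residual satisfies
‖𝒞 − 𝒜⋆𝒳‖_F = ‖ ‖ℛ₀‖_F e₁ − H̃_m y ‖₂. -/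
theorem tglobal_gmres_residual_norm {n s p m : ℕ}
    (A : Fin n → Fin n → Fin p → ℝ)
    (C X₀ : Fin n → Fin s → Fin p → ℝ)
    (V : Fin (m + 1) → Fin n → Fin s → Fin p → ℝ)
    (H : Matrix (Fin (m + 1)) (Fin m) ℝ)
    -- the 𝒱_i are orthonormal
    (horth : ∀ i j : Fin (m + 1), tinner (V i) (V j) = if i = j then 1 else 0)
    -- the T-global Arnoldi relation 𝒜 ⋆ 𝕍_m = 𝕍_{m+1} ⊛ H̃_m
    (harnoldi : ∀ j : Fin m,
      tprod3 A (V j.castSucc) = ∑ i : Fin (m + 1), H i j • V i)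
    -- ℛ₀ = ‖ℛ₀‖_F 𝒱₁
    (hR0 : C - tprod3 A X₀ = tnorm (C - tprod3 A X₀) • V 0)
    (y : Fin m → ℝ) :
    tnorm (C - tprod3 A (X₀ + ∑ j : Fin m, y j • V j.castSucc)) =
      Real.sqrt (∑ i : Fin (m + 1),
        (tnorm (C - tprod3 A X₀) * (if i = 0 then 1 else 0) - (H *ᵥ y) i) ^ 2) := by
  rw [tglobal_arnoldi_residual_eq A C X₀ V H harnoldi hR0 y,
    tnorm_sum_smul_of_orthonormal V horth]
end
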